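/- On ℝ⁵ with coordinates (z,w,x,v,y), let θ¹ = dz − 2z dx, θ² = dw + w dx + y((wz+v) dx + z dw − dv), θ³ = (1 + 2yz) dx − y dz, θ⁴ = dv − z dw − (v + wz) dx, θ⁵ = dy + 2y(1+yz) dx − y² dz, and let g be the field of symmetric bilinear forms g = 2θ¹θ² + 2θ³θ⁴ + (θ⁵)². For λ ∈ ℝ let φ_λ be the linear map φ_λ(z,w,x,v,y) = (e^{−2λ} z, e^{2λ} w, e^{−λ} x, e^{λ} v, y). Then for every point q ∈ ℝ⁵ and all tangent vectors u,v' ∈ ℝ⁵, the pullback (φ_λ^* g)(q)(u,v') = g(φ_λ(q))(φ_λ u, φ_λ v') converges, as λ → ∞, to G(u,v'), where G is the constant (flat) form G = 2 dz dw + 2 dx dv + (dy)². -/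

import Mathlib

open Filter

namespace Stmt10

/-- Coordinates: `q 0 = z`, `q 1 = w`, `q 2 = x`, `q 3 = v`, `q 4 = y`.
`θ¹ = dz − 2z dx`. -/
def θ1 (q u : Fin 5 → ℝ) : ℝ := u 0 - 2 * q 0 * u 2

/-- `θ² = dw + w dx + y((wz+v) dx + z dw − dv)`. -/
def θ2 (q u : Fin 5 → ℝ) : ℝ :=
  u 1 + q 1 * u 2 + q 4 * ((q 1 * q 0 + q 3) * u 2 + q 0 * u 1 - u 3)

/-- `θ³ = (1 + 2yz) dx − y dz`. -/
def θ3 (q u : Fin 5 → ℝ) : ℝ := (1 + 2 * q 4 * q 0) * u 2 - q 4 * u 0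

/-- `θ⁴ = dv − z dw − (v + wz) dx`. -/
def θ4 (q u : Fin 5 → ℝ) : ℝ := u 3 - q 0 * u 1 - (q 3 + q 1 * q 0) * u 2

/-- `θ⁵ = dy + 2y(1+yz) dx − y² dz`. -/
def θ5 (q u : Fin 5 → ℝ) : ℝ := u 4 + 2 * q 4 * (1 + q 4 * q 0) * u 2 - q 4 ^ 2 * u 0

/-- The field of symmetric bilinear forms `g = 2θ¹θ² + 2θ³θ⁴ + (θ⁵)²`. -/
def metric (q u v : Fin 5 → ℝ) : ℝ :=
  (θ1 q u * θ2 q v + θ2 q u * θ1 q v) + (θ3 q u * θ4 q v + θ4 q u * θ3 q v) +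
    θ5 q u * θ5 q v

/-- The linear map `φ_λ(z,w,x,v,y) = (e^{−2λ} z, e^{2λ} w, e^{−λ} x, e^{λ} v, y)`. -/
noncomputable def φ (l : ℝ) (q : Fin 5 → ℝ) : Fin 5 → ℝ :=
  ![Real.exp (-2 * l) * q 0, Real.exp (2 * l) * q 1, Real.exp (-l) * q 2,
    Real.exp l * q 3, q 4]

/-- The constant flat form `G = 2 dz dw + 2 dx dv + (dy)²`. -/
def flatG (u v : Fin 5 → ℝ) : ℝ :=
  u 0 * v 1 + u 1 * v 0 + u 2 * v 3 + u 3 * v 2 + u 4 * v 4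

/-!
Writing `θ = (θ¹, …, θ⁵)` for the coframe, `g = G(θ, θ)`, and `G` is invariant under `φ_λ`,
which scales the paired coordinates by reciprocal factors. Pulling back, the coframe satisfies
`θ(φ_λ q)(φ_λ u) = φ_λ (θₜ(q)(u))` with `t = e^{−λ}`, where `θₜ` is polynomial in `t` and
`θ₀(q)(u) = u`. Hence `φ_λ^* g = G(θₜ, θₜ)`, which tends to `G` as `t → 0`.
-/

def coframe (q u : Fin 5 → ℝ) : Fin 5 → ℝ :=
  ![θ1 q u, θ2 q u, θ3 q u, θ4 q u, θ5 q u]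

/-- The coframe at `φ_λ q`, conjugated by `φ_λ`, written in terms of `t = e^{−λ}`. -/
def rescaledCoframe (t : ℝ) (q u : Fin 5 → ℝ) : Fin 5 → ℝ :=
  ![u 0 - 2 * t * q 0 * u 2,
    u 1 + t * q 1 * u 2 +
      q 4 * (t ^ 3 * q 1 * q 0 * u 2 + t ^ 2 * q 3 * u 2 + t ^ 2 * q 0 * u 1 - t * u 3),
    (1 + 2 * q 4 * t ^ 2 * q 0) * u 2 - t * q 4 * u 0,
    u 3 - t * q 0 * u 1 - t * q 3 * u 2 - t ^ 2 * q 1 * q 0 * u 2,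
    u 4 + 2 * q 4 * (1 + q 4 * t ^ 2 * q 0) * t * u 2 - t ^ 2 * q 4 ^ 2 * u 0]

theorem metric_eq_flatG_coframe (q u v : Fin 5 → ℝ) :
    metric q u v = flatG (coframe q u) (coframe q v) := by
  simp only [metric, flatG, coframe, Matrix.cons_val]
  ring

theorem flatG_φ (l : ℝ) (a b : Fin 5 → ℝ) : flatG (φ l a) (φ l b) = flatG a b := by
  have h2 : Real.exp (-2 * l) * Real.exp (2 * l) = 1 := by rw [← Real.exp_add]; simp
  have h1 : Real.exp (-l) * Real.exp l = 1 := by rw [← Real.exp_add]; simp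
  simp only [flatG, φ, Matrix.cons_val]
  linear_combination (a 0 * b 1 + a 1 * b 0) * h2 + (a 2 * b 3 + a 3 * b 2) * h1

theorem coframe_φ (l : ℝ) (q u : Fin 5 → ℝ) :
    coframe (φ l q) (φ l u) = φ l (rescaledCoframe (Real.exp (-l)) q u) := by
  have h2 : Real.exp (2 * l) = Real.exp l ^ 2 := by rw [← Real.exp_nat_mul]; norm_num
  have hm2 : Real.exp (-2 * l) = (Real.exp l)⁻¹ ^ 2 := by
    rw [← Real.exp_neg, ← Real.exp_nat_mul]; ring_nf
  ext i
  fin_cases i <;>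
    simp only [coframe, rescaledCoframe, φ, θ1, θ2, θ3, θ4, θ5, h2, hm2, Real.exp_neg,
      Matrix.cons_val, Fin.zero_eta, Fin.mk_one, Fin.reduceFinMk] <;>
    field_simp
  ring

theorem rescaledCoframe_zero (q u : Fin 5 → ℝ) : rescaledCoframe 0 q u = u := by
  ext i
  fin_cases i <;> simp [rescaledCoframe]

theorem continuous_rescaledCoframe (q u : Fin 5 → ℝ) :
    Continuous fun t => rescaledCoframe t q u := by
  unfold rescaledCoframe
  fun_prop

/-- For every point `q` and tangent vectors `u, v'`, the pullback
`(φ_λ^* g)(q)(u,v') = g(φ_λ q)(φ_λ u, φ_λ v')` converges to `G(u,v')` as `λ → ∞`. -/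
theorem pullback_tendsto_flat (q u v' : Fin 5 → ℝ) :
    Tendsto (fun l : ℝ => metric (φ l q) (φ l u) (φ l v')) atTop (nhds (flatG u v')) := by
  have h_pullback (l : ℝ) : metric (φ l q) (φ l u) (φ l v') =
      flatG (rescaledCoframe (Real.exp (-l)) q u) (rescaledCoframe (Real.exp (-l)) q v') := by
    rw [metric_eq_flatG_coframe, coframe_φ, coframe_φ, flatG_φ]
  have h_flatG : Continuous fun t => flatG (rescaledCoframe t q u) (rescaledCoframe t q v') := by
    have := continuous_rescaledCoframe q u
    have := continuous_rescaledCoframe q v'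
    unfold flatG
    fun_prop
  have h_lim := (h_flatG.tendsto 0).comp Real.tendsto_exp_neg_atTop_nhds_zero
  simpa only [Function.comp_def, h_pullback, rescaledCoframe_zero] using h_lim

end Stmt10
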